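/- Let F : ℝ^d → ℝ be differentiable, φ differentiable and σ-strongly convex, and suppose Lφ ± F are convex (relative smoothness with constant L). Let h be the indicator function of a nonempty closed convex set 𝒳, fix 0 < λ < 1/(2L), and define x̂ = argmin_y { F(y) + h(y) + (1/(2λ)) D_φ(y, x) } for x ∈ 𝒳 (the minimizer exists and is unique by strong convexity). Then: x is a stationary point of min F + h (i.e., 0 ∈ ∇F(x) + ∂h(x)) if and only if D_φ(x̂, x) = 0. -/

import Mathlib

/-!
If `x` is stationary, then `⟪∇F x, x̂ - x⟫ ≥ 0`, and relative smoothness (convexity of `Lφ + F`)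
gives `F x̂ ≥ F x + ⟪∇F x, x̂ - x⟫ - L D_φ(x̂, x)`. Comparing the prox objective at `x̂` with its
value at `x` then yields `(1/(2λ) - L) D_φ(x̂, x) ≤ 0`, and `1/(2λ) > L` forces `D_φ(x̂, x) = 0`.
Conversely, `D_φ(x̂, x) = 0` forces `x̂ = x` by strong convexity of `φ`; as `y ↦ D_φ(y, x)` has
zero derivative at `y = x`, the first-order optimality condition of the prox problem at `x` is
exactly stationarity of `x`.
-/

open Set

section Bregman

variable {E : Type*} [NormedAddCommGroup E] [NormedSpace ℝ E]

theorem ConvexOn.add_fderiv_sub_le {f : E → ℝ} {f' : E →L[ℝ] ℝ} {x : E}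
    (hc : ConvexOn ℝ univ f) (hf : HasFDerivAt f f' x) (y : E) :
    f x + f' (y - x) ≤ f y := by
  have hline : ConvexOn ℝ univ (f ∘ AffineMap.lineMap (k := ℝ) x y) := by
    simpa using hc.comp_affineMap (AffineMap.lineMap (k := ℝ) x y)
  have hderiv : HasDerivAt (f ∘ AffineMap.lineMap (k := ℝ) x y) (f' (y - x)) 0 := by
    have hf0 : HasFDerivAt f f' (AffineMap.lineMap x y (0 : ℝ)) := by simpa using hf
    exact hf0.comp_hasDerivAt 0 AffineMap.hasDerivAt_lineMap
  have hslope := hline.deriv_le_slope (mem_univ 0) (mem_univ 1) one_pos hderiv.differentiableAt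
  rw [hderiv.deriv, slope_def_field] at hslope
  simp only [Function.comp_apply, AffineMap.lineMap_apply_zero, AffineMap.lineMap_apply_one]
    at hslope
  linarith

noncomputable def bregmanDiv (φ : E → ℝ) (y x : E) : ℝ :=
  φ y - φ x - fderiv ℝ φ x (y - x)

variable {φ ψ : E → ℝ} {x y : E}

@[simp]
theorem bregmanDiv_self : bregmanDiv φ x x = 0 := by
  simp [bregmanDiv]

theorem ConvexOn.bregmanDiv_nonneg (hc : ConvexOn ℝ univ φ) (hφ : DifferentiableAt ℝ φ x) (y : E) :
    0 ≤ bregmanDiv φ y x := by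
  have := hc.add_fderiv_sub_le hφ.hasFDerivAt y
  rw [bregmanDiv]
  linarith

theorem bregmanDiv_add (hφ : DifferentiableAt ℝ φ x) (hψ : DifferentiableAt ℝ ψ x) :
    bregmanDiv (fun z => φ z + ψ z) y x = bregmanDiv φ y x + bregmanDiv ψ y x := by
  simp only [bregmanDiv, fderiv_fun_add hφ hψ, add_apply]
  ring

theorem bregmanDiv_sub (hφ : DifferentiableAt ℝ φ x) (hψ : DifferentiableAt ℝ ψ x) :
    bregmanDiv (fun z => φ z - ψ z) y x = bregmanDiv φ y x - bregmanDiv ψ y x := by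
  simp only [bregmanDiv, fderiv_fun_sub hφ hψ, sub_apply]
  ring

theorem bregmanDiv_const_mul (hφ : DifferentiableAt ℝ φ x) (c : ℝ) :
    bregmanDiv (fun z => c * φ z) y x = c * bregmanDiv φ y x := by
  simp only [bregmanDiv, fderiv_const_mul hφ, smul_apply, smul_eq_mul]
  ring

theorem hasFDerivAt_bregmanDiv_self (hφ : DifferentiableAt ℝ φ x) :
    HasFDerivAt (fun y => bregmanDiv φ y x) (0 : E →L[ℝ] ℝ) x := by
  have h := (hφ.hasFDerivAt.sub_const (φ x)).fun_sub
    ((fderiv ℝ φ x).hasFDerivAt.comp x ((hasFDerivAt_id x).sub_const x))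
  rw [ContinuousLinearMap.comp_id, sub_self] at h
  exact h

theorem IsMinOn.hasFDerivAt_nonneg_of_convex {f : E → ℝ} {f' : E →L[ℝ] ℝ} {X : Set E}
    (hmin : IsMinOn f X x) (hX : Convex ℝ X) (hx : x ∈ X) (hf : HasFDerivAt f f' x)
    (hy : y ∈ X) : 0 ≤ f' (y - x) :=
  hmin.localize.hasFDerivWithinAt_nonneg hf.hasFDerivWithinAt
    (sub_mem_posTangentConeAt_of_segment_subset (hX.segment_subset hx hy))

theorem fderiv_nonneg_of_isMinOn_add_bregmanDiv {F : E → ℝ} {X : Set E} {c : ℝ}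
    (hF : DifferentiableAt ℝ F x) (hφ : DifferentiableAt ℝ φ x) (hX : Convex ℝ X) (hx : x ∈ X)
    (hmin : IsMinOn (fun y => F y + c * bregmanDiv φ y x) X x) (hy : y ∈ X) :
    0 ≤ fderiv ℝ F x (y - x) := by
  have hderiv : HasFDerivAt (fun y => F y + c * bregmanDiv φ y x) (fderiv ℝ F x) x := by
    have h := hF.hasFDerivAt.fun_add ((hasFDerivAt_bregmanDiv_self hφ).const_mul c)
    rwa [smul_zero, add_zero] at h
  exact hmin.hasFDerivAt_nonneg_of_convex hX hx hderiv hy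

theorem neg_mul_bregmanDiv_le_bregmanDiv {F : E → ℝ} {L : ℝ}
    (hrel : ConvexOn ℝ univ fun z => L * φ z + F z) (hφ : DifferentiableAt ℝ φ x)
    (hF : DifferentiableAt ℝ F x) (y : E) :
    -(L * bregmanDiv φ y x) ≤ bregmanDiv F y x := by
  have := hrel.bregmanDiv_nonneg ((hφ.const_mul L).add hF) y
  rw [bregmanDiv_add (hφ.const_mul L) hF, bregmanDiv_const_mul hφ] at this
  linarith

theorem bregmanDiv_eq_zero_of_fderiv_nonneg {F : E → ℝ} {L c : ℝ}
    (hrel : ConvexOn ℝ univ fun z => L * φ z + F z) (hφ : DifferentiableAt ℝ φ x)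
    (hF : DifferentiableAt ℝ F x) (hLc : L < c) (hnonneg : 0 ≤ bregmanDiv φ y x)
    (hdescent : F y + c * bregmanDiv φ y x ≤ F x) (hstat : 0 ≤ fderiv ℝ F x (y - x)) :
    bregmanDiv φ y x = 0 := by
  have hsmooth := neg_mul_bregmanDiv_le_bregmanDiv hrel hφ hF y
  have hF' : bregmanDiv F y x = F y - F x - fderiv ℝ F x (y - x) := rfl
  have : (c - L) * bregmanDiv φ y x ≤ 0 := by linarith
  exact le_antisymm (nonpos_of_mul_nonpos_right this (sub_pos.mpr hLc)) hnonneg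

end Bregman

section InnerProductSpace

variable {E : Type*} [NormedAddCommGroup E] [InnerProductSpace ℝ E] {φ : E → ℝ} {x y : E}

theorem bregmanDiv_norm_sq (x y : E) : bregmanDiv (fun z => ‖z‖ ^ 2) y x = ‖y - x‖ ^ 2 := by
  rw [bregmanDiv, fderiv_norm_sq_apply, norm_sub_sq_real]
  simp only [smul_apply, innerSL_apply_apply, inner_sub_right,
    real_inner_self_eq_norm_sq, real_inner_comm x y]
  ring

theorem sq_norm_sub_le_bregmanDiv {σ : ℝ} (hφ : DifferentiableAt ℝ φ x)
    (hsc : ConvexOn ℝ univ fun z => φ z - σ / 2 * ‖z‖ ^ 2) (y : E) :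
    σ / 2 * ‖y - x‖ ^ 2 ≤ bregmanDiv φ y x := by
  have hsq : DifferentiableAt ℝ (fun z : E => ‖z‖ ^ 2) x := differentiableAt_id.norm_sq ℝ
  have := hsc.bregmanDiv_nonneg (hφ.sub (hsq.const_mul _)) y
  rw [bregmanDiv_sub hφ (hsq.const_mul _), bregmanDiv_const_mul hsq, bregmanDiv_norm_sq] at this
  linarith

theorem eq_of_bregmanDiv_eq_zero {σ : ℝ} (hσ : 0 < σ) (hφ : DifferentiableAt ℝ φ x)
    (hsc : ConvexOn ℝ univ fun z => φ z - σ / 2 * ‖z‖ ^ 2) (h : bregmanDiv φ y x = 0) :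
    y = x := by
  have hle := sq_norm_sub_le_bregmanDiv hφ hsc y
  rw [h] at hle
  have : ‖y - x‖ ^ 2 = 0 := le_antisymm (by nlinarith) (sq_nonneg _)
  simpa [sub_eq_zero] using this

theorem exists_normal_add_eq_zero_iff {X : Set E} {g : E} :
    (∃ v : E, (∀ y ∈ X, inner ℝ v (y - x) ≤ 0) ∧ g + v = 0) ↔ ∀ y ∈ X, 0 ≤ inner ℝ g (y - x) := by
  constructor
  · rintro ⟨v, hv, hgv⟩ y hy
    have := hv y hy
    rw [eq_neg_of_add_eq_zero_right hgv, inner_neg_left] at this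
    linarith
  · intro h
    exact ⟨-g, fun y hy => by simpa [inner_neg_left] using h y hy, add_neg_cancel g⟩

end InnerProductSpace

theorem lt_one_div_two_mul_of_lt_one_div_two_mul {a b : ℝ} (ha : 0 < a) (h : a < 1 / (2 * b)) :
    b < 1 / (2 * a) := by
  have hb : 0 < b := by
    by_contra! hb
    have : 1 / (2 * b) ≤ 0 := div_nonpos_of_nonneg_of_nonpos zero_le_one (by linarith)
    linarith
  rw [lt_div_iff₀ (by positivity)] at h ⊢
  linarith

theorem stmt9_general {d : ℕ} (F φ : EuclideanSpace ℝ (Fin d) → ℝ)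
    (hF : Differentiable ℝ F) (hφ : Differentiable ℝ φ)
    (σ : ℝ) (hσ : 0 < σ)
    (hsc : ConvexOn ℝ Set.univ (fun z => φ z - σ / 2 * ‖z‖ ^ 2))
    (L : ℝ)
    (hL1 : ConvexOn ℝ Set.univ (fun z => L * φ z + F z))
    (X : Set (EuclideanSpace ℝ (Fin d)))
    (hXcv : Convex ℝ X)
    (lam : ℝ) (hlam : 0 < lam) (hlam' : lam < 1 / (2 * L))
    (D : EuclideanSpace ℝ (Fin d) → EuclideanSpace ℝ (Fin d) → ℝ)
    (hD : ∀ u v, D u v = φ u - φ v - (inner ℝ (gradient φ v) (u - v) : ℝ))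
    (x xhat : EuclideanSpace ℝ (Fin d)) (hx : x ∈ X) (hxhat : xhat ∈ X)
    (hmin : ∀ y ∈ X,
      F xhat + 1 / (2 * lam) * D xhat x ≤ F y + 1 / (2 * lam) * D y x) :
    (∃ v : EuclideanSpace ℝ (Fin d),
        (∀ y ∈ X, (inner ℝ v (y - x) : ℝ) ≤ 0) ∧ gradient F x + v = 0) ↔
      D xhat x = 0 := by
  obtain rfl : D = bregmanDiv φ := by
    funext u v
    rw [hD, inner_gradient_left, bregmanDiv]
  simp only [exists_normal_add_eq_zero_iff, inner_gradient_left]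
  constructor
  · intro hstat
    have hnonneg : 0 ≤ bregmanDiv φ xhat x :=
      (by positivity : 0 ≤ σ / 2 * ‖xhat - x‖ ^ 2).trans (sq_norm_sub_le_bregmanDiv (hφ x) hsc xhat)
    have hdescent : F xhat + 1 / (2 * lam) * bregmanDiv φ xhat x ≤ F x := by
      simpa using hmin x hx
    exact bregmanDiv_eq_zero_of_fderiv_nonneg hL1 (hφ x) (hF x)
      (lt_one_div_two_mul_of_lt_one_div_two_mul hlam hlam') hnonneg hdescent (hstat xhat hxhat)
  · intro h0
    obtain rfl := eq_of_bregmanDiv_eq_zero hσ (hφ x) hsc h0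
    have hfixed : IsMinOn (fun y => F y + 1 / (2 * lam) * bregmanDiv φ y xhat) X xhat :=
      fun y hy => by simpa [h0] using hmin y hy
    exact fun y hy => fderiv_nonneg_of_isMinOn_add_bregmanDiv (hF xhat) (hφ xhat) hXcv hx hfixed hy

theorem stmt9 {d : ℕ} (F φ : EuclideanSpace ℝ (Fin d) → ℝ)
    (hF : Differentiable ℝ F) (hφ : Differentiable ℝ φ)
    (σ : ℝ) (hσ : 0 < σ)
    (hsc : ConvexOn ℝ Set.univ (fun z => φ z - σ / 2 * ‖z‖ ^ 2))
    (L : ℝ) (hL : 0 < L)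
    (hL1 : ConvexOn ℝ Set.univ (fun z => L * φ z + F z))
    (hL2 : ConvexOn ℝ Set.univ (fun z => L * φ z - F z))
    (X : Set (EuclideanSpace ℝ (Fin d)))
    (hXne : X.Nonempty) (hXcl : IsClosed X) (hXcv : Convex ℝ X)
    (lam : ℝ) (hlam : 0 < lam) (hlam' : lam < 1 / (2 * L))
    (D : EuclideanSpace ℝ (Fin d) → EuclideanSpace ℝ (Fin d) → ℝ)
    (hD : ∀ u v, D u v = φ u - φ v - (inner ℝ (gradient φ v) (u - v) : ℝ))
    (x xhat : EuclideanSpace ℝ (Fin d)) (hx : x ∈ X) (hxhat : xhat ∈ X)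
    (hmin : ∀ y ∈ X,
      F xhat + 1 / (2 * lam) * D xhat x ≤ F y + 1 / (2 * lam) * D y x) :
    (∃ v : EuclideanSpace ℝ (Fin d),
        (∀ y ∈ X, (inner ℝ v (y - x) : ℝ) ≤ 0) ∧ gradient F x + v = 0) ↔
      D xhat x = 0 :=
  stmt9_general F φ hF hφ σ hσ hsc L hL1 X hXcv lam hlam hlam' D hD x xhat hx hxhat hmin
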